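/- arXiv:2302.12399 — 2 statements merged into one kernel-verified Lean document; each statement's English description precedes it below -/
import Mathlib

section
/- Let a ∈ ℝ^m with ε|a| < m/2. Then the map Φ: {v ∈ ℝ^m : |v| < 1/2} → ℝ^m defined by Φ(v) = v / (1 − (ε/m) a·v) is injective, and its inverse satisfies Φ⁻¹(z) = z(1 − (ε/m) a·z) + r(z) with |r(z)| ≤ C(m,|a|) ε² for |z| ≤ 1. -/
/-- For `ε·|a| < m/2`, the map `Φ(v) = v / (1 − (ε/m) a·v)` is injective on
`{|v| < 1/2}`, and its inverse satisfies `Φ⁻¹(z) = z(1 − (ε/m) a·z) + r(z)` with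
`|r(z)| ≤ C(m,|a|) ε²` for `|z| ≤ 1`. -/
theorem stmt_3 (m : ℕ) (hm : 1 ≤ m) (a : EuclideanSpace ℝ (Fin m)) :
    ∃ C : ℝ, 0 < C ∧ ∀ ε : ℝ, 0 < ε → ε * ‖a‖ < m / 2 →
      Set.InjOn (fun v : EuclideanSpace ℝ (Fin m) =>
          (1 - (ε / m) * ∑ i, a i * v i)⁻¹ • v) {v | ‖v‖ < 1 / 2} ∧
      ∀ v z : EuclideanSpace ℝ (Fin m), ‖v‖ < 1 / 2 → ‖z‖ ≤ 1 →
        (1 - (ε / m) * ∑ i, a i * v i)⁻¹ • v = z →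
        ‖v - (1 - (ε / m) * ∑ i, a i * z i) • z‖ ≤ C * ε ^ 2 := by
  have hm' : (1:ℝ) ≤ (m:ℝ) := by exact_mod_cast hm
  have hm0 : (0:ℝ) < (m:ℝ) := by linarith
  refine ⟨2 * ‖a‖^2 / (m:ℝ)^2 + 1, by positivity, ?_⟩
  intro ε hε hεa
  have hip : ∀ w : EuclideanSpace ℝ (Fin m), |∑ i, a i * w i| ≤ ‖a‖ * ‖w‖ := by
    intro w
    have h := abs_real_inner_le_norm a w
    simpa [PiLp.inner_apply, RCLike.inner_apply, starRingEnd_apply, mul_comm] using h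
  set t : ℝ := ε / m with ht
  have ht0 : 0 < t := div_pos hε hm0
  have hta : t * ‖a‖ < 1/2 := by
    rw [ht, div_mul_eq_mul_div, div_lt_iff₀ hm0]
    linarith
  clear_value t
  -- positivity of the denominator
  have hs : ∀ v : EuclideanSpace ℝ (Fin m), ‖v‖ < 1/2 →
      (3/4 : ℝ) ≤ 1 - t * ∑ i, a i * v i := by
    intro v hv
    have h1 : |t * ∑ i, a i * v i| ≤ t * (‖a‖ * ‖v‖) := by
      rw [abs_mul, abs_of_pos ht0]
      exact mul_le_mul_of_nonneg_left (hip v) ht0.le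
    have h2 : t * (‖a‖ * ‖v‖) ≤ (1/2) * ‖v‖ := by
      rw [← mul_assoc]; exact mul_le_mul_of_nonneg_right hta.le (norm_nonneg v)
    have h3 := abs_le.mp (h1.trans h2)
    nlinarith [norm_nonneg v, h3.1, h3.2]
  -- structural fact
  have key : ∀ v z : EuclideanSpace ℝ (Fin m), ‖v‖ < 1/2 →
      (1 - t * ∑ i, a i * v i)⁻¹ • v = z →
      v = (1 - t * ∑ i, a i * v i) • z ∧
      (1 - t * ∑ i, a i * v i) * (1 + t * ∑ i, a i * z i) = 1 := by
    intro v z hv hvz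
    set s : ℝ := 1 - t * ∑ i, a i * v i with hsdef
    have h34 : (3/4 : ℝ) ≤ s := hs v hv
    have hs0 : s ≠ 0 := by intro h; rw [h] at h34; norm_num at h34
    have hvs : v = s • z := by
      rw [← hvz, smul_smul, mul_inv_cancel₀ hs0, one_smul]
    refine ⟨hvs, ?_⟩
    have hSv : ∑ i, a i * v i = s * ∑ i, a i * z i := by
      rw [hvs, Finset.mul_sum]
      refine Finset.sum_congr rfl fun i _ => ?_
      simp only [PiLp.smul_apply, smul_eq_mul]
      ring
    have e := hsdef
    rw [hSv] at e
    linear_combination e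
  constructor
  · -- injectivity
    intro v₁ hv₁ v₂ hv₂ heq
    simp only [Set.mem_setOf_eq] at hv₁ hv₂
    set z := (1 - t * ∑ i, a i * v₁ i)⁻¹ • v₁ with hz
    have heq2 : (1 - t * ∑ i, a i * v₂ i)⁻¹ • v₂ = z := heq.symm
    have h1 := key v₁ z hv₁ rfl
    have h2 := key v₂ z hv₂ heq2
    have e1 := h1.2
    have e2 := h2.2
    have hne : (1 + t * ∑ i, a i * z i) ≠ 0 := by
      intro h; rw [h, mul_zero] at e1; exact one_ne_zero e1.symm
    have hseq : (1 - t * ∑ i, a i * v₁ i) = (1 - t * ∑ i, a i * v₂ i) :=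
      mul_right_cancel₀ hne (e1.trans e2.symm)
    rw [h1.1, h2.1, hseq]
  · -- inverse bound
    intro v z hv hz hvz
    obtain ⟨hvs, hprod⟩ := key v z hv hvz
    set u : ℝ := t * ∑ i, a i * z i with hu
    have hu2 : |u| ≤ t * ‖a‖ := by
      rw [hu, abs_mul, abs_of_pos ht0]
      calc t * |∑ i, a i * z i| ≤ t * (‖a‖ * ‖z‖) :=
            mul_le_mul_of_nonneg_left (hip z) ht0.le
        _ ≤ t * (‖a‖ * 1) := by
            apply mul_le_mul_of_nonneg_left _ ht0.le
            exact mul_le_mul_of_nonneg_left hz (norm_nonneg a)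
        _ = t * ‖a‖ := by ring
    have huabs : |u| < 1/2 := lt_of_le_of_lt hu2 hta
    have hu1 : (1:ℝ)/2 < 1 + u := by
      have := abs_lt.mp huabs; linarith [this.1]
    have h10 : (1 + u) ≠ 0 := by linarith
    set s : ℝ := 1 - t * ∑ i, a i * v i with hsdef
    clear_value u s
    have hdiff : v - (1 - u) • z = (s - (1 - u)) • z := by
      rw [hvs, ← sub_smul]
    have hsval : s - (1 - u) = u^2 / (1 + u) := by
      rw [eq_div_iff h10]
      linear_combination hprod
    have hq : (0:ℝ) ≤ u^2 / (1 + u) := div_nonneg (sq_nonneg u) (by linarith)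
    have hnorm : ‖v - (1 - u) • z‖ ≤ 2 * u^2 := by
      rw [hdiff, norm_smul, hsval, Real.norm_eq_abs, abs_of_nonneg hq]
      calc u^2 / (1+u) * ‖z‖ ≤ u^2 / (1+u) * 1 :=
            mul_le_mul_of_nonneg_left hz hq
        _ = u^2 / (1+u) := mul_one _
        _ ≤ 2 * u^2 := by
            rw [div_le_iff₀ (by linarith)]
            nlinarith [sq_nonneg u]
    have hfin : 2 * u^2 ≤ (2 * ‖a‖^2 / (m:ℝ)^2 + 1) * ε^2 := by
      have h1 : u^2 ≤ (t * ‖a‖)^2 := by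
        calc u^2 = |u|^2 := (sq_abs u).symm
          _ ≤ (t * ‖a‖)^2 := pow_le_pow_left₀ (abs_nonneg u) hu2 2
      have h2 : (t * ‖a‖)^2 = ‖a‖^2 / (m:ℝ)^2 * ε^2 := by
        rw [ht]; ring
      rw [h2] at h1
      have e : (2 * ‖a‖^2 / (m:ℝ)^2 + 1) * ε^2
          = 2 * (‖a‖^2 / (m:ℝ)^2 * ε^2) + ε^2 := by ring
      rw [e]
      linarith [sq_nonneg ε, h1]
    exact hnorm.trans hfin
end

section
/- Let m ≥ 1, a, b ∈ ℝ^m, A ∈ ℝ^{m×m} symmetric, and σ = α/(m+2). Then ∫_{B(0,1)} [ (a·z) − (ε/m)(b·z)(a·z) + ε z·Az ] · [1 + 2ε (b·z)] · [1 − ε(1+1/m)(b·z)] dz = ε σ [ (1 − 2/m)(a·b) + Tr(A) ] + O(ε²), with the implied constant depending on m, |a|, |b|, ‖A‖. -/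
open MeasureTheory Metric

section Stmt8Aux

variable (m : ℕ)

private lemma stmt8_isom (f : EuclideanSpace ℝ (Fin m) ≃ₗᵢ[ℝ] EuclideanSpace ℝ (Fin m))
    (g : EuclideanSpace ℝ (Fin m) → ℝ) :
    ∫ z in closedBall (0 : EuclideanSpace ℝ (Fin m)) 1, g (f z)
      = ∫ z in closedBall (0 : EuclideanSpace ℝ (Fin m)) 1, g z := by
  have hpre : f ⁻¹' (closedBall (0 : EuclideanSpace ℝ (Fin m)) 1) = closedBall 0 1 := by
    ext z
    simp [mem_closedBall, dist_zero_right, f.norm_map]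
  calc ∫ z in closedBall (0 : EuclideanSpace ℝ (Fin m)) 1, g (f z)
      = ∫ z in f ⁻¹' (closedBall 0 1), g (f z) := by rw [hpre]
    _ = _ := f.measurePreserving.setIntegral_preimage_emb
        f.toHomeomorph.measurableEmbedding _ _

private lemma stmt8_m1 (i : Fin m) :
    ∫ z in closedBall (0 : EuclideanSpace ℝ (Fin m)) 1, z i = 0 := by
  have h := stmt8_isom m (LinearIsometryEquiv.neg ℝ) (fun z => z i)
  have h2 : ∀ z : EuclideanSpace ℝ (Fin m),
      ((LinearIsometryEquiv.neg ℝ) z) i = -(z i) := fun z => rfl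
  simp only [h2, integral_neg] at h
  linarith

private lemma stmt8_m2off (i j : Fin m) (hij : i ≠ j) :
    ∫ z in closedBall (0 : EuclideanSpace ℝ (Fin m)) 1, z i * z j = 0 := by
  classical
  set f := LinearIsometryEquiv.piLpCongrRight (𝕜 := ℝ) 2
      (fun k : Fin m => if k = i then LinearIsometryEquiv.neg ℝ (E := ℝ)
        else LinearIsometryEquiv.refl ℝ ℝ) with hf
  have h := stmt8_isom m f (fun z => z i * z j)
  have hfz : ∀ (z : EuclideanSpace ℝ (Fin m)) (k : Fin m),
      f z k = if k = i then -(z k) else z k := by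
    intro z k
    rcases eq_or_ne k i with hk | hk
    · subst hk
      simp [hf, LinearIsometryEquiv.piLpCongrRight_apply]
    · simp [hf, LinearIsometryEquiv.piLpCongrRight_apply, hk]
  have h2 : ∀ z : EuclideanSpace ℝ (Fin m), f z i * f z j = -(z i * z j) := by
    intro z
    rw [hfz z i, hfz z j, if_pos rfl, if_neg (fun hc => hij hc.symm)]
    ring
  simp only [h2, integral_neg] at h
  linarith

private lemma stmt8_diag_eq (i j : Fin m) :
    ∫ z in closedBall (0 : EuclideanSpace ℝ (Fin m)) 1, z i * z i
      = ∫ z in closedBall (0 : EuclideanSpace ℝ (Fin m)) 1, z j * z j := by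
  have h := stmt8_isom m
    (LinearIsometryEquiv.piLpCongrLeft 2 ℝ ℝ (Equiv.swap i j)) (fun z => z i * z i)
  have h2 : ∀ z : EuclideanSpace ℝ (Fin m),
      (LinearIsometryEquiv.piLpCongrLeft 2 ℝ ℝ (Equiv.swap i j)) z i = z j := by
    intro z
    simp only [LinearIsometryEquiv.piLpCongrLeft_apply, Equiv.piCongrLeft'_apply,
      Equiv.symm_swap]
    rw [Equiv.swap_apply_left]
  simp only [h2] at h
  exact h.symm

private lemma stmt8_cont (i : Fin m) :
    Continuous fun z : EuclideanSpace ℝ (Fin m) => z i :=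
  (EuclideanSpace.proj i).continuous

private lemma stmt8_intOn {g : EuclideanSpace ℝ (Fin m) → ℝ} (hg : Continuous g) :
    IntegrableOn g (closedBall (0 : EuclideanSpace ℝ (Fin m)) 1) volume :=
  hg.continuousOn.integrableOn_compact (isCompact_closedBall 0 1)

private lemma stmt8_normsq (hm : 1 ≤ m) :
    ∫ z in closedBall (0 : EuclideanSpace ℝ (Fin m)) 1, ‖z‖ ^ 2
      = m * (volume (closedBall (0 : EuclideanSpace ℝ (Fin m)) 1)).toReal / (m + 2) := by
  have hnt : Nontrivial (EuclideanSpace ℝ (Fin m)) := by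
    apply Module.nontrivial_of_finrank_pos (R := ℝ)
    rw [finrank_euclideanSpace_fin]; omega
  have key := integral_fun_norm_addHaar (volume : Measure (EuclideanSpace ℝ (Fin m)))
      (fun y : ℝ => if y ≤ 1 then y ^ 2 else 0)
  have hdim : Module.finrank ℝ (EuclideanSpace ℝ (Fin m)) = m := finrank_euclideanSpace_fin
  rw [hdim] at key
  have hL : (fun x : EuclideanSpace ℝ (Fin m) => if ‖x‖ ≤ 1 then ‖x‖ ^ 2 else 0)
      = (closedBall (0 : EuclideanSpace ℝ (Fin m)) 1).indicator (fun x => ‖x‖ ^ 2) := by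
    funext x
    rcases le_or_gt ‖x‖ 1 with hx | hx
    · rw [if_pos hx, Set.indicator_of_mem (mem_closedBall_zero_iff.2 hx)]
    · rw [if_neg (not_le.2 hx),
        Set.indicator_of_notMem (fun hc => absurd (mem_closedBall_zero_iff.1 hc) (not_le.2 hx))]
  rw [show (∫ x : EuclideanSpace ℝ (Fin m), if ‖x‖ ≤ 1 then ‖x‖ ^ 2 else 0)
      = ∫ x in closedBall (0 : EuclideanSpace ℝ (Fin m)) 1, ‖x‖ ^ 2 by
    rw [hL, integral_indicator measurableSet_closedBall]] at key
  have hin : (∫ y in Set.Ioi (0 : ℝ), y ^ (m - 1) • (if y ≤ 1 then y ^ 2 else 0))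
      = 1 / (m + 2) := by
    have hcong : ∀ y ∈ Set.Ioi (0 : ℝ),
        y ^ (m - 1) • (if y ≤ 1 then y ^ 2 else 0)
          = (Set.Iic (1 : ℝ)).indicator (fun y => y ^ (m + 1)) y := by
      intro y _
      rcases le_or_gt y 1 with hy | hy
      · rw [if_pos hy, Set.indicator_of_mem (Set.mem_Iic.2 hy), smul_eq_mul, ← pow_add]
        congr 1
        omega
      · rw [if_neg (not_le.2 hy), smul_zero,
          Set.indicator_of_notMem (fun hc => absurd (Set.mem_Iic.1 hc) (not_le.2 hy))]
    rw [setIntegral_congr_fun measurableSet_Ioi hcong,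
      setIntegral_indicator measurableSet_Iic, Set.Ioi_inter_Iic,
      ← intervalIntegral.integral_of_le zero_le_one, integral_pow]
    push_cast
    norm_num
    ring
  rw [hin] at key
  rw [key, measureReal_def, ← Measure.addHaar_closedBall_eq_addHaar_ball]
  simp only [nsmul_eq_mul, smul_eq_mul]
  ring

private lemma stmt8_m2diag (hm : 1 ≤ m) (i : Fin m) :
    ∫ z in closedBall (0 : EuclideanSpace ℝ (Fin m)) 1, z i * z i
      = (volume (closedBall (0 : EuclideanSpace ℝ (Fin m)) 1)).toReal / (m + 2) := by
  have hsum : (∑ j : Fin m, ∫ z in closedBall (0 : EuclideanSpace ℝ (Fin m)) 1, z j * z j)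
      = ∫ z in closedBall (0 : EuclideanSpace ℝ (Fin m)) 1, ‖z‖ ^ 2 := by
    rw [← integral_finset_sum _ (f := fun j (z : EuclideanSpace ℝ (Fin m)) => z j * z j)
      (fun j _ => stmt8_intOn m ((stmt8_cont m j).mul (stmt8_cont m j)))]
    refine setIntegral_congr_fun measurableSet_closedBall fun z _ => ?_
    rw [EuclideanSpace.norm_eq, Real.sq_sqrt (by positivity)]
    exact Finset.sum_congr rfl fun j _ => by rw [Real.norm_eq_abs, sq_abs, sq]
  have hsame : (∑ j : Fin m, ∫ z in closedBall (0 : EuclideanSpace ℝ (Fin m)) 1, z j * z j)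
      = m * ∫ z in closedBall (0 : EuclideanSpace ℝ (Fin m)) 1, z i * z i := by
    rw [Finset.sum_congr rfl fun j _ => stmt8_diag_eq m j i]
    simp [Finset.sum_const]
  have hm0 : (m : ℝ) ≠ 0 := by positivity
  have hX := hsame.symm.trans (hsum.trans (stmt8_normsq m hm))
  have h2 : (m : ℝ) * (∫ z in closedBall (0 : EuclideanSpace ℝ (Fin m)) 1, z i * z i)
      = (m : ℝ) * ((volume (closedBall (0 : EuclideanSpace ℝ (Fin m)) 1)).toReal / (m + 2)) := by
    rw [hX]; ring
  exact mul_left_cancel₀ hm0 h2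

private lemma stmt8_m2 (hm : 1 ≤ m) (i j : Fin m) :
    ∫ z in closedBall (0 : EuclideanSpace ℝ (Fin m)) 1, z i * z j
      = if i = j
        then (volume (closedBall (0 : EuclideanSpace ℝ (Fin m)) 1)).toReal / (m + 2)
        else 0 := by
  by_cases h : i = j
  · subst h
    rw [if_pos rfl]
    exact stmt8_m2diag m hm i
  · rw [if_neg h]
    exact stmt8_m2off m i j h

end Stmt8Aux

/-- The key moment computation: for `a, b ∈ ℝ^m`, symmetric `A`, and
`σ = α/(m+2)`,
`∫_{B(0,1)} [(a·z) − (ε/m)(b·z)(a·z) + ε z·Az]·[1 + 2ε(b·z)]·[1 − ε(1+1/m)(b·z)] dz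
  = ε σ [(1 − 2/m)(a·b) + Tr A] + O(ε²)`. -/
theorem stmt_8 (m : ℕ) (hm : 1 ≤ m) (a b : EuclideanSpace ℝ (Fin m))
    (A : Matrix (Fin m) (Fin m) ℝ) (hA : A.IsSymm) (α σ : ℝ)
    (hα : α = (volume (Metric.closedBall (0 : EuclideanSpace ℝ (Fin m)) 1)).toReal)
    (hσ : σ = α / (m + 2)) :
    ∃ C : ℝ, 0 < C ∧ ∀ ε : ℝ, 0 < ε → ε ≤ 1 →
      |(∫ z in Metric.closedBall (0 : EuclideanSpace ℝ (Fin m)) 1,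
          ((∑ i, a i * z i) - (ε / m) * (∑ i, b i * z i) * (∑ i, a i * z i)
              + ε * ∑ i, ∑ j, A i j * z i * z j)
            * (1 + 2 * ε * ∑ i, b i * z i)
            * (1 - ε * (1 + 1 / m) * ∑ i, b i * z i))
        - ε * σ * ((1 - 2 / m) * (∑ i, a i * b i) + A.trace)| ≤ C * ε ^ 2 := by
  classical
  set S := Metric.closedBall (0 : EuclideanSpace ℝ (Fin m)) 1 with hS
  -- the basic polynomials
  set P : EuclideanSpace ℝ (Fin m) → ℝ := fun z => ∑ i, a i * z i with hPdef
  set Q : EuclideanSpace ℝ (Fin m) → ℝ := fun z => ∑ i, b i * z i with hQdef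
  set R : EuclideanSpace ℝ (Fin m) → ℝ := fun z => ∑ i, ∑ j, A i j * z i * z j with hRdef
  have hcP : Continuous P :=
    continuous_finset_sum _ fun i _ => continuous_const.mul (stmt8_cont m i)
  have hcQ : Continuous Q :=
    continuous_finset_sum _ fun i _ => continuous_const.mul (stmt8_cont m i)
  have hcR : Continuous R :=
    continuous_finset_sum _ fun i _ => continuous_finset_sum _ fun j _ =>
      (continuous_const.mul (stmt8_cont m i)).mul (stmt8_cont m j)
  -- moments
  have hM2 : ∀ i j : Fin m, ∫ z in S, z i * z j = if i = j then σ else 0 := by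
    intro i j
    rw [hS, stmt8_m2 m hm i j, hσ, hα]
  have hPint : ∫ z in S, P z = 0 := by
    rw [hPdef,
      integral_finset_sum _ (f := fun i (z : EuclideanSpace ℝ (Fin m)) => a i * z i)
        fun i _ => stmt8_intOn m (continuous_const.mul (stmt8_cont m i))]
    simp only [integral_const_mul]
    simp [stmt8_m1 m]
  have hQP : ∫ z in S, Q z * P z = σ * ∑ i, a i * b i := by
    have h1 : ∀ z : EuclideanSpace ℝ (Fin m),
        Q z * P z = ∑ i, ∑ j, b i * a j * (z i * z j) := by
      intro z
      rw [hQdef, hPdef]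
      rw [Finset.sum_mul_sum]
      exact Finset.sum_congr rfl fun i _ => Finset.sum_congr rfl fun j _ => by ring
    simp_rw [h1]
    rw [integral_finset_sum _ (f := fun i (z : EuclideanSpace ℝ (Fin m)) =>
        ∑ j, b i * a j * (z i * z j)) fun i _ => stmt8_intOn m (continuous_finset_sum _ fun j _ =>
      continuous_const.mul ((stmt8_cont m i).mul (stmt8_cont m j))), ← hS]
    have h2 : ∀ i : Fin m, (∫ z in S, ∑ j, b i * a j * (z i * z j))
        = ∑ j, b i * a j * ∫ z in S, z i * z j := by
      intro i
      rw [integral_finset_sum _ (f := fun j (z : EuclideanSpace ℝ (Fin m)) =>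
          b i * a j * (z i * z j)) fun j _ => stmt8_intOn m
        (continuous_const.mul ((stmt8_cont m i).mul (stmt8_cont m j)))]
      exact Finset.sum_congr rfl fun j _ => integral_const_mul _ _
    simp only [h2, hM2, mul_ite, mul_zero, Finset.sum_ite_eq, Finset.mem_univ, if_true,
      Finset.mul_sum]
    exact Finset.sum_congr rfl fun i _ => by ring
  have hRint : ∫ z in S, R z = σ * A.trace := by
    rw [hRdef]
    rw [integral_finset_sum _ (f := fun i (z : EuclideanSpace ℝ (Fin m)) =>
        ∑ j, A i j * z i * z j) fun i _ => stmt8_intOn m (continuous_finset_sum _ fun j _ =>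
      (continuous_const.mul (stmt8_cont m i)).mul (stmt8_cont m j)), ← hS]
    have h2 : ∀ i : Fin m, (∫ z in S, ∑ j, A i j * z i * z j)
        = ∑ j, A i j * ∫ z in S, z i * z j := by
      intro i
      rw [integral_finset_sum _ (f := fun j (z : EuclideanSpace ℝ (Fin m)) =>
          A i j * z i * z j) fun j _ => stmt8_intOn m
        ((continuous_const.mul (stmt8_cont m i)).mul (stmt8_cont m j))]
      refine Finset.sum_congr rfl fun j _ => ?_
      rw [← integral_const_mul]
      exact setIntegral_congr_fun measurableSet_closedBall fun z _ => by ring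
    simp only [h2, hM2, mul_ite, mul_zero, Finset.sum_ite_eq, Finset.mem_univ, if_true]
    rw [Matrix.trace, Finset.mul_sum]
    exact Finset.sum_congr rfl fun i _ => by rw [Matrix.diag_apply]; ring
  -- the ε-expansion
  set f1 : EuclideanSpace ℝ (Fin m) → ℝ :=
    fun z => (1 - 2 / (m : ℝ)) * (Q z * P z) + R z with hf1def
  set f2 : EuclideanSpace ℝ (Fin m) → ℝ :=
    fun z => (1 - 1 / (m : ℝ)) * Q z * (R z - Q z * P z / m)
      - 2 * (1 + 1 / (m : ℝ)) * Q z ^ 2 * P z with hf2def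
  set f3 : EuclideanSpace ℝ (Fin m) → ℝ :=
    fun z => -(2 * (1 + 1 / (m : ℝ)) * Q z ^ 2 * (R z - Q z * P z / m)) with hf3def
  have hcf1 : Continuous f1 := (continuous_const.mul (hcQ.mul hcP)).add hcR
  have hcf2 : Continuous f2 :=
    (((continuous_const.mul hcQ).mul (hcR.sub ((hcQ.mul hcP).mul continuous_const)))).sub
      ((continuous_const.mul (hcQ.pow 2)).mul hcP)
  have hcf3 : Continuous f3 :=
    ((continuous_const.mul (hcQ.pow 2)).mul
      (hcR.sub ((hcQ.mul hcP).mul continuous_const))).neg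
  have hf1int : ∫ z in S, f1 z = σ * ((1 - 2 / m) * (∑ i, a i * b i) + A.trace) := by
    rw [hf1def]
    rw [integral_add (f := fun z => (1 - 2 / (m : ℝ)) * (Q z * P z))
      (stmt8_intOn m (continuous_const.mul (hcQ.mul hcP))) (stmt8_intOn m hcR)]
    rw [integral_const_mul, hQP, hRint]
    ring
  set I2 : ℝ := ∫ z in S, f2 z with hI2
  set I3 : ℝ := ∫ z in S, f3 z with hI3
  refine ⟨|I2| + |I3| + 1, by positivity, fun ε hε hε1 => ?_⟩
  have hsplit : (∫ z in S,
      ((∑ i, a i * z i) - (ε / m) * (∑ i, b i * z i) * (∑ i, a i * z i)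
          + ε * ∑ i, ∑ j, A i j * z i * z j)
        * (1 + 2 * ε * ∑ i, b i * z i)
        * (1 - ε * (1 + 1 / m) * ∑ i, b i * z i))
      = (∫ z in S, P z) + ε * (∫ z in S, f1 z) + ε ^ 2 * I2 + ε ^ 3 * I3 := by
    have hpt : ∀ z : EuclideanSpace ℝ (Fin m),
        ((∑ i, a i * z i) - (ε / m) * (∑ i, b i * z i) * (∑ i, a i * z i)
            + ε * ∑ i, ∑ j, A i j * z i * z j)
          * (1 + 2 * ε * ∑ i, b i * z i)
          * (1 - ε * (1 + 1 / m) * ∑ i, b i * z i)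
        = P z + ε * f1 z + ε ^ 2 * f2 z + ε ^ 3 * f3 z := by
      intro z
      simp only [hPdef, hQdef, hRdef, hf1def, hf2def, hf3def]
      ring
    rw [setIntegral_congr_fun measurableSet_closedBall fun z _ => hpt z]
    have hg1 : IntegrableOn (fun z => ε * f1 z) S volume := (stmt8_intOn m hcf1).const_mul ε
    have hg2 : IntegrableOn (fun z => ε ^ 2 * f2 z) S volume :=
      (stmt8_intOn m hcf2).const_mul (ε ^ 2)
    have hg3 : IntegrableOn (fun z => ε ^ 3 * f3 z) S volume :=
      (stmt8_intOn m hcf3).const_mul (ε ^ 3)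
    have hs1 : IntegrableOn (fun z => P z + ε * f1 z) S volume := (stmt8_intOn m hcP).add hg1
    have hs2 : IntegrableOn (fun z => P z + ε * f1 z + ε ^ 2 * f2 z) S volume := hs1.add hg2
    rw [integral_add hs2 hg3, integral_add hs1 hg2,
      integral_add (stmt8_intOn m hcP) hg1,
      integral_const_mul, integral_const_mul, integral_const_mul]
  rw [hsplit, hPint, hf1int]
  have heq : 0 + ε * (σ * ((1 - 2 / m) * (∑ i, a i * b i) + A.trace)) + ε ^ 2 * I2 + ε ^ 3 * I3
      - ε * σ * ((1 - 2 / m) * (∑ i, a i * b i) + A.trace) = ε ^ 2 * I2 + ε ^ 3 * I3 := by ring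
  rw [heq]
  have h1 : |ε ^ 2 * I2 + ε ^ 3 * I3| ≤ |ε ^ 2 * I2| + |ε ^ 3 * I3| := abs_add_le _ _
  have h2 : |ε ^ 2 * I2| = ε ^ 2 * |I2| := by
    rw [abs_mul, abs_of_nonneg (by positivity : (0:ℝ) ≤ ε ^ 2)]
  have h3 : |ε ^ 3 * I3| = ε ^ 3 * |I3| := by
    rw [abs_mul, abs_of_nonneg (by positivity : (0:ℝ) ≤ ε ^ 3)]
  have h4 : ε ^ 3 ≤ ε ^ 2 := by nlinarith
  nlinarith [abs_nonneg I2, abs_nonneg I3, sq_nonneg ε]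
end
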